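/- arXiv:0903.0888 — 2 statements merged into one kernel-verified Lean document; each statement's English description precedes it below -/
import Mathlib

section
/- For every positive integer i, the function x ↦ x^i · |ψ^(i)(x)| is strictly decreasing on (0, ∞), where ψ^(i) denotes the i-th polygamma function. -/
noncomputable def digamma : ℝ → ℝ := deriv (fun x => Real.log (Real.Gamma x))

noncomputable def polygamma (i : ℕ) : ℝ → ℝ := iteratedDeriv i digamma

/-!
Differentiating Euler's limit for `log Γ` gives `ψ(x) = -γ + ∑ₘ (1/(m+1) - 1/(x+m))`, hence
`|ψ^(i)(x)| = i! ∑ₙ (x+n)^-(i+1)`. Since `i! x^i (x+n)^-(i+1) = x⁻¹ ∫₀^∞ u^i e^{-u} e^{-nu/x} du`,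
summing the geometric series gives
`x^i |ψ^(i)(x)| = ∫₀^∞ u^i e^{-u} / (x (1 - e^{-u/x})) du`,
and `x (1 - e^{-u/x})` is strictly increasing in `x`: up to the factor `u` it is the slope of the
secant of the strictly convex `exp` between `-u/x` and `0`.
-/

open Real Set Filter Topology MeasureTheory
open scoped Nat

/-- The Hurwitz zeta value `ζ(k, x)` for `x > 0`; the `tsum` is the junk value `0` when `k ≤ 1`. -/
noncomputable def hurwitzSeries (k : ℕ) (x : ℝ) : ℝ := ∑' n : ℕ, ((x + n) ^ k)⁻¹

lemma summable_inv_add_pow {k : ℕ} (hk : 2 ≤ k) {x : ℝ} (hx : 0 < x) :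
    Summable fun n : ℕ => ((x + n) ^ k)⁻¹ := by
  refine ((summable_one_div_nat_add_rpow x k).mpr (by exact_mod_cast hk)).congr fun n => ?_
  rw [add_comm, abs_of_pos (by positivity), rpow_natCast, one_div]

lemma hurwitzSeries_pos {k : ℕ} (hk : 2 ≤ k) {x : ℝ} (hx : 0 < x) : 0 < hurwitzSeries k x :=
  (summable_inv_add_pow hk hx).tsum_pos (fun n => by positivity) 0 (by simpa using pow_pos hx k)

lemma hasDerivAt_inv_add_pow (k n : ℕ) {y : ℝ} (hy : 0 < y) :
    HasDerivAt (fun z : ℝ => ((z + n) ^ k)⁻¹) (-k * ((y + n) ^ (k + 1))⁻¹) y := by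
  have hyn : y + n ≠ 0 := by positivity
  have h := (hasDerivAt_zpow (-k : ℤ) (y + n) (.inl hyn)).comp_add_const y n
  simp only [zpow_neg, zpow_natCast,
    show (-(k : ℤ) - 1) = -((k + 1 : ℕ) : ℤ) by push_cast; ring] at h
  exact h.congr_deriv (by push_cast; ring)

lemma hasDerivAt_tsum_sub_inv_add_pow (c : ℕ → ℝ) {k : ℕ} (hk : 1 ≤ k) {x : ℝ} (hx : 0 < x)
    (hc : Summable fun n : ℕ => c n - ((x + n) ^ k)⁻¹) :
    HasDerivAt (fun y : ℝ => ∑' n : ℕ, (c n - ((y + n) ^ k)⁻¹))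
      (k * hurwitzSeries (k + 1) x) x := by
  have hmem : x / 2 < x := by linarith
  have h := hasDerivAt_tsum_of_isPreconnected (t := Ioi (x / 2))
    (g := fun (n : ℕ) (y : ℝ) => c n - ((y + n) ^ k)⁻¹)
    (g' := fun (n : ℕ) (y : ℝ) => k * ((y + n) ^ (k + 1))⁻¹)
    (u := fun n : ℕ => k * ((x / 2 + n) ^ (k + 1))⁻¹)
    ((summable_inv_add_pow (k := k + 1) (by omega) (half_pos hx)).mul_left (k : ℝ)) isOpen_Ioi
    (convex_Ioi _).isPreconnected
    (fun n y hy => by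
      simpa using (hasDerivAt_inv_add_pow k n ((half_pos hx).trans hy)).const_sub (c n))
    (fun n y (hy : x / 2 < y) => by
      have : 0 < x / 2 + n := by positivity
      have : 0 < y := (half_pos hx).trans hy
      rw [norm_mul, Real.norm_natCast, norm_inv, norm_pow, Real.norm_of_nonneg (by positivity)]
      gcongr)
    hmem hc hmem
  rwa [tsum_mul_left] at h

lemma hasDerivAt_hurwitzSeries {k : ℕ} (hk : 2 ≤ k) {x : ℝ} (hx : 0 < x) :
    HasDerivAt (hurwitzSeries k) (-k * hurwitzSeries (k + 1) x) x := by
  have h := (hasDerivAt_tsum_sub_inv_add_pow 0 (k := k) (by omega) hx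
    (by simpa using (summable_inv_add_pow hk hx).neg)).fun_neg
  simp only [Pi.zero_apply, zero_sub, tsum_neg, neg_neg, ← neg_mul] at h
  exact h

noncomputable def digammaSeries (x : ℝ) : ℝ :=
  -eulerMascheroniConstant + ∑' m : ℕ, (((m : ℝ) + 1)⁻¹ - (x + m)⁻¹)

lemma abs_inv_succ_sub_inv_add_le {a b y : ℝ} (ha : 0 < a) (hay : a ≤ y) (hyb : y ≤ b) (m : ℕ) :
    |((m : ℝ) + 1)⁻¹ - (y + m)⁻¹| ≤ (b + 1) / (min a 1 + m) ^ 2 := by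
  have hmin : 0 < min a 1 := lt_min ha one_pos
  have hy : 0 < y := ha.trans_le hay
  have h1 : min a 1 + m ≤ m + 1 := by linarith [min_le_right a 1]
  have h2 : min a 1 + m ≤ y + m := by linarith [min_le_left a 1]
  have hden : 0 < ((m : ℝ) + 1) * (y + m) := by positivity
  rw [inv_sub_inv (by positivity) (by positivity), abs_div, abs_of_pos hden]
  refine div_le_div₀ (by linarith) ?_ (by positivity) ?_
  · rw [abs_le]; constructor <;> linarith
  · rw [sq]; gcongr

lemma summable_inv_succ_sub_inv_add {x : ℝ} (hx : 0 < x) :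
    Summable fun m : ℕ => ((m : ℝ) + 1)⁻¹ - (x + m)⁻¹ := by
  refine .of_norm_bounded ((summable_inv_add_pow le_rfl (lt_min hx one_pos)).mul_left (x + 1))
    fun m => ?_
  rw [← div_eq_mul_inv]
  exact abs_inv_succ_sub_inv_add_le hx le_rfl le_rfl m

lemma tendsto_log_sub_sum_inv_succ :
    Tendsto (fun n : ℕ => log n - ∑ m ∈ Finset.range (n + 1), ((m : ℝ) + 1)⁻¹) atTop
      (𝓝 (-eulerMascheroniConstant)) := by
  have h := (tendsto_harmonic_sub_log.add tendsto_one_div_add_atTop_nhds_zero_nat).neg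
  rw [add_zero] at h
  refine h.congr fun n => ?_
  push_cast [harmonic, Finset.sum_range_succ]
  ring

lemma tendstoUniformlyOn_deriv_logGammaSeq {a b : ℝ} (ha : 0 < a) :
    TendstoUniformlyOn (fun (n : ℕ) (y : ℝ) => log n - ∑ m ∈ Finset.range (n + 1), (y + m)⁻¹)
      digammaSeries atTop (Icc a b) := by
  have hsum := tendstoUniformlyOn_tsum_nat
    ((summable_inv_add_pow le_rfl (lt_min ha one_pos)).mul_left (b + 1))
    (f := fun (m : ℕ) (y : ℝ) => ((m : ℝ) + 1)⁻¹ - (y + m)⁻¹)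
    (s := Icc a b) fun m y hy => by
      rw [← div_eq_mul_inv]
      exact abs_inv_succ_sub_inv_add_le ha hy.1 hy.2 m
  have hsum_succ : TendstoUniformlyOn
      (fun (n : ℕ) (y : ℝ) => ∑ m ∈ Finset.range (n + 1), (((m : ℝ) + 1)⁻¹ - (y + m)⁻¹))
      (fun y => ∑' m : ℕ, (((m : ℝ) + 1)⁻¹ - (y + m)⁻¹)) atTop (Icc a b) :=
    fun u hu => (tendsto_add_atTop_nat 1).eventually (hsum u hu)
  refine ((tendsto_log_sub_sum_inv_succ.tendstoUniformlyOn_const _).add hsum_succ).congr ?_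
  filter_upwards with n y _
  simp only [Pi.add_apply, Finset.sum_sub_distrib]
  ring

lemma hasDerivAt_logGammaSeq (n : ℕ) {y : ℝ} (hy : 0 < y) :
    HasDerivAt (fun z => BohrMollerup.logGammaSeq z n)
      (log n - ∑ m ∈ Finset.range (n + 1), (y + m)⁻¹) y := by
  have hlog : ∀ m ∈ Finset.range (n + 1),
      HasDerivAt (fun z => log (z + m)) (y + m)⁻¹ y := fun m _ => by
    simpa using ((hasDerivAt_id y).add_const (m : ℝ)).log (by positivity)
  exact ((hasDerivAt_mul_const (log n)).add_const (log n !)).fun_sub (.fun_sum hlog)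

lemma eqOn_digamma_digammaSeries : EqOn digamma digammaSeries (Ioi 0) := by
  intro x (hx : 0 < x)
  have hsub : Ioo (x / 2) (x + 1) ⊆ Ioi 0 := fun y hy => (half_pos hx).trans hy.1
  refine (hasDerivAt_of_tendstoLocallyUniformlyOn isOpen_Ioo
    ((tendstoUniformlyOn_deriv_logGammaSeq (half_pos hx)).mono Ioo_subset_Icc_self
      |>.tendstoLocallyUniformlyOn)
    (.of_forall fun n y hy => hasDerivAt_logGammaSeq n (hsub hy))
    (fun y hy => BohrMollerup.tendsto_log_gamma (hsub hy))
    ⟨by linarith, by linarith⟩).deriv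

lemma hasDerivAt_digammaSeries {x : ℝ} (hx : 0 < x) :
    HasDerivAt digammaSeries (hurwitzSeries 2 x) x := by
  have h := hasDerivAt_tsum_sub_inv_add_pow (fun m => ((m : ℝ) + 1)⁻¹) le_rfl hx
    (by simpa using summable_inv_succ_sub_inv_add hx)
  simp only [pow_one, Nat.cast_one, one_mul] at h
  exact h.const_add _

lemma eqOn_polygamma {i : ℕ} (hi : 1 ≤ i) :
    EqOn (polygamma i) (fun x => (-1) ^ (i + 1) * i ! * hurwitzSeries (i + 1) x) (Ioi 0) := by
  induction i, hi using Nat.le_induction with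
  | base =>
    intro x hx
    rw [polygamma, iteratedDeriv_one, eqOn_digamma_digammaSeries.deriv isOpen_Ioi hx,
      (hasDerivAt_digammaSeries hx).deriv]
    norm_num
  | succ i hi ih =>
    intro x (hx : 0 < x)
    rw [polygamma, iteratedDeriv_succ, ← polygamma, ih.deriv isOpen_Ioi hx,
      (((hasDerivAt_hurwitzSeries (by omega) hx).const_mul _)).deriv, Nat.factorial_succ]
    push_cast
    ring

lemma lintegral_pow_mul_exp_neg_mul (i : ℕ) {r : ℝ} (hr : 0 < r) :
    ∫⁻ u in Ioi 0, ENNReal.ofReal (u ^ i * exp (-(r * u)))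
      = ENNReal.ofReal (i ! / r ^ (i + 1)) := by
  have hint : IntegrableOn (fun u : ℝ => u ^ i * exp (-(r * u))) (Ioi 0) :=
    (integrableOn_rpow_mul_exp_neg_mul_rpow (s := i) (by linarith [i.cast_nonneg (α := ℝ)])
      one_pos hr).congr_fun (fun u _ => by simp [rpow_natCast]) measurableSet_Ioi
  rw [← ofReal_integral_eq_lintegral_ofReal hint
    (ae_restrict_of_forall_mem measurableSet_Ioi fun u (hu : 0 < u) => by positivity)]
  have h := integral_rpow_mul_exp_neg_mul_Ioi (a := i + 1) (by positivity) hr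
  simp only [add_sub_cancel_right, rpow_natCast, Gamma_nat_eq_factorial] at h
  rw [h, ← Nat.cast_succ, rpow_natCast, one_div, inv_pow, div_eq_inv_mul]

lemma one_sub_exp_neg_div_pos {x u : ℝ} (hx : 0 < x) (hu : 0 < u) : 0 < 1 - exp (-(u / x)) :=
  sub_pos.mpr (exp_lt_one_iff.mpr (neg_neg_of_pos (div_pos hu hx)))

lemma ofReal_div_mul_one_sub_exp_eq_tsum (i : ℕ) {x u : ℝ} (hx : 0 < x) (hu : 0 < u) :
    ENNReal.ofReal (u ^ i * exp (-u) / (x * (1 - exp (-(u / x)))))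
      = ∑' n : ℕ, ENNReal.ofReal x⁻¹ * ENNReal.ofReal (u ^ i * exp (-((x + n) / x * u))) := by
  have hq0 : 0 ≤ exp (-(u / x)) := (exp_pos _).le
  have hq1 : exp (-(u / x)) < 1 := sub_pos.mp (one_sub_exp_neg_div_pos hx hu)
  have hterm : ∀ n : ℕ, x⁻¹ * (u ^ i * exp (-((x + n) / x * u)))
      = x⁻¹ * (u ^ i * exp (-u)) * exp (-(u / x)) ^ n := fun n => by
    rw [← exp_nat_mul, mul_assoc, mul_assoc, ← exp_add]
    congr 3
    field_simp
    ring
  simp_rw [← ENNReal.ofReal_mul (inv_nonneg.mpr hx.le), hterm]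
  rw [← ENNReal.ofReal_tsum_of_nonneg (fun n => by positivity)
    ((summable_geometric_of_lt_one hq0 hq1).mul_left _), tsum_mul_left,
    tsum_geometric_of_lt_one hq0 hq1]
  congr 1
  have := one_sub_exp_neg_div_pos hx hu
  field_simp

lemma lintegral_div_mul_one_sub_exp {i : ℕ} (hi : 1 ≤ i) {x : ℝ} (hx : 0 < x) :
    ∫⁻ u in Ioi 0, ENNReal.ofReal (u ^ i * exp (-u) / (x * (1 - exp (-(u / x)))))
      = ENNReal.ofReal (x ^ i * (i ! * hurwitzSeries (i + 1) x)) := by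
  have hterm : ∀ n : ℕ, ∫⁻ u in Ioi 0,
      ENNReal.ofReal x⁻¹ * ENNReal.ofReal (u ^ i * exp (-((x + n) / x * u)))
      = ENNReal.ofReal (x ^ i * (i ! * ((x + n) ^ (i + 1))⁻¹)) := fun n => by
    rw [lintegral_const_mul' _ _ ENNReal.ofReal_ne_top,
      lintegral_pow_mul_exp_neg_mul i (by positivity), ← ENNReal.ofReal_mul (by positivity)]
    congr 1
    rw [div_pow]
    field_simp
    ring
  rw [setLIntegral_congr_fun measurableSet_Ioi
      fun u hu => ofReal_div_mul_one_sub_exp_eq_tsum i hx hu,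
    lintegral_tsum fun n => by fun_prop, tsum_congr hterm,
    ← ENNReal.ofReal_tsum_of_nonneg (fun n => by positivity)
      (((summable_inv_add_pow (by omega) hx).mul_left _).mul_left _),
    tsum_mul_left, tsum_mul_left, hurwitzSeries]

lemma mul_one_sub_exp_neg_div_lt {x y u : ℝ} (hx : 0 < x) (hxy : x < y) (hu : 0 < u) :
    x * (1 - exp (-(u / x))) < y * (1 - exp (-(u / y))) := by
  have hy := hx.trans hxy
  have h := strictConvexOn_exp.secant_strict_mono (mem_univ 0) (mem_univ (-(u / x)))
    (mem_univ (-(u / y))) (by simp [hx.ne', hu.ne']) (by simp [hy.ne', hu.ne'])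
    (neg_lt_neg (div_lt_div_of_pos_left hu hx hxy))
  have slope : ∀ z : ℝ, 0 < z → (exp (-(u / z)) - exp 0) / (-(u / z) - 0)
      = z * (1 - exp (-(u / z))) / u := fun z hz => by
    rw [exp_zero, sub_zero]
    field_simp
    ring
  rw [slope x hx, slope y hy] at h
  exact (div_lt_div_iff_of_pos_right hu).mp h

lemma strictAntiOn_pow_mul_factorial_mul_hurwitzSeries {i : ℕ} (hi : 1 ≤ i) :
    StrictAntiOn (fun x : ℝ => x ^ i * (i ! * hurwitzSeries (i + 1) x)) (Ioi 0) := by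
  intro x (hx : 0 < x) y (hy : 0 < y) hxy
  have hlt := lintegral_strict_mono (μ := volume.restrict (Ioi 0))
    (f := fun u => ENNReal.ofReal (u ^ i * exp (-u) / (y * (1 - exp (-(u / y))))))
    (g := fun u => ENNReal.ofReal (u ^ i * exp (-u) / (x * (1 - exp (-(u / x))))))
    (by simp) (by fun_prop) (lintegral_div_mul_one_sub_exp hi hy ▸ ENNReal.ofReal_ne_top)
    (ae_restrict_of_forall_mem measurableSet_Ioi fun u (hu : 0 < u) => by
      have hden : 0 < x * (1 - exp (-(u / x))) := mul_pos hx (one_sub_exp_neg_div_pos hx hu)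
      rw [ENNReal.ofReal_lt_ofReal_iff (by positivity)]
      exact div_lt_div_of_pos_left (by positivity) hden (mul_one_sub_exp_neg_div_lt hx hxy hu))
  rw [lintegral_div_mul_one_sub_exp hi hx, lintegral_div_mul_one_sub_exp hi hy] at hlt
  exact (ENNReal.ofReal_lt_ofReal_iff_of_nonneg
    (by have := hurwitzSeries_pos (by omega : 2 ≤ i + 1) hy; positivity)).mp hlt

lemma abs_polygamma {i : ℕ} (hi : 1 ≤ i) {x : ℝ} (hx : 0 < x) :
    |polygamma i x| = i ! * hurwitzSeries (i + 1) x := by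
  rw [eqOn_polygamma hi hx, abs_mul, abs_mul, abs_pow, abs_neg, abs_one, one_pow, one_mul,
    Nat.abs_cast, abs_of_pos (hurwitzSeries_pos (by omega) hx)]

theorem stmt1 (i : ℕ) (hi : 0 < i) :
    StrictAntiOn (fun x : ℝ => x ^ i * |polygamma i x|) (Set.Ioi 0) :=
  (strictAntiOn_pow_mul_factorial_mul_hurwitzSeries hi).congr fun x hx => by
    rw [abs_polygamma hi hx]
end

section
/- The function x ↦ ψ(e^x) is strictly concave on ℝ, where ψ is the digamma function. -/
/-!
Since `d/dx ψ(eˣ) = eˣ ψ'(eˣ)`, strict concavity amounts to `ψ'(t) + t ψ''(t) < 0` for `t > 0`.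
Differentiating the Bohr–Mollerup approximations `logGammaSeq` of `log Γ` gives Euler's series
`ψ(t) = -γ - 1/t + ∑ₖ (1/(k+1) - 1/(t+k+1))`, hence `ψ'(t) = ∑ₖ 1/(t+k)²` and
`ψ''(t) = -2 ∑ₖ 1/(t+k)³`. The claim becomes `∑_{k ≥ 1} (1/(t+k)² - 2t/(t+k)³) < 1/t²`, which
follows by comparing each term with the increments of the telescoping sequence
`G(a) = 1/a - t (1/a² - 1/a³)` at `a = t + k`, since `G(t) = 1/t²`.
-/

open Filter Topology Finset Real Set

theorem tsum_le_of_le_sub_succ {f g : ℕ → ℝ} (hf : Summable f) (hg : Tendsto g atTop (𝓝 0))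
    (hle : ∀ k, f k ≤ g k - g (k + 1)) : ∑' k, f k ≤ g 0 := by
  have hpartial : ∀ n, ∑ k ∈ range n, f k ≤ g 0 - g n := fun n =>
    (sum_le_sum fun k _ => hle k).trans_eq (sum_range_sub' g n)
  simpa using le_of_tendsto_of_tendsto' hf.hasSum.tendsto_sum_nat (hg.const_sub (g 0)) hpartial

theorem tsum_lt_of_le_sub_succ {f g : ℕ → ℝ} (hf : Summable f) (hg : Tendsto g atTop (𝓝 0))
    (hle : ∀ k, f k ≤ g k - g (k + 1)) (hlt : f 0 < g 0 - g 1) : ∑' k, f k < g 0 := by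
  have htail : ∑' k, f (k + 1) ≤ g 1 :=
    tsum_le_of_le_sub_succ ((summable_nat_add_iff 1).mpr hf) (hg.comp (tendsto_add_atTop_nat 1))
      fun k => hle (k + 1)
  rw [hf.tsum_eq_zero_add]
  linarith

theorem summable_one_div_nat_add_one_pow {p : ℕ} (hp : 2 ≤ p) :
    Summable fun k : ℕ => 1 / ((k : ℝ) + 1) ^ p := by
  simpa using (summable_nat_add_iff 1).mpr (summable_one_div_nat_pow.mpr hp)

theorem summable_one_div_add_pow {x : ℝ} (hx : 0 ≤ x) {p : ℕ} (hp : 2 ≤ p) :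
    Summable fun k : ℕ => 1 / (x + k + 1) ^ p := by
  refine (summable_one_div_nat_add_one_pow hp).of_nonneg_of_le (fun k => by positivity)
    fun k => ?_
  gcongr
  linarith

theorem one_div_sub_one_div_add_le {x : ℝ} (hx : 0 ≤ x) (k : ℕ) :
    1 / ((k : ℝ) + 1) - 1 / (x + k + 1) ≤ x * (1 / ((k : ℝ) + 1) ^ 2) := by
  have hdiff : 1 / ((k : ℝ) + 1) - 1 / (x + k + 1) = x / ((k + 1) * (x + k + 1)) := by
    field_simp; ring
  rw [hdiff, mul_one_div, sq]
  exact div_le_div_of_nonneg_left hx (by positivity) (by gcongr; linarith)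

theorem summable_one_div_sub_one_div_add {x : ℝ} (hx : 0 ≤ x) :
    Summable fun k : ℕ => 1 / ((k : ℝ) + 1) - 1 / (x + k + 1) :=
  ((summable_one_div_nat_add_one_pow le_rfl).mul_left x).of_nonneg_of_le
    (fun k => sub_nonneg.mpr (by gcongr; linarith)) (one_div_sub_one_div_add_le hx)

theorem tendsto_one_div_add_pow_atTop (x : ℝ) {p : ℕ} (hp : p ≠ 0) :
    Tendsto (fun k : ℕ => 1 / (x + k) ^ p) atTop (𝓝 0) := by
  have h : Tendsto (fun k : ℕ => (x + k) ^ p) atTop atTop :=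
    (tendsto_pow_atTop hp).comp (tendsto_atTop_add_const_left _ x tendsto_natCast_atTop_atTop)
  simpa [one_div, Pi.inv_def] using h.inv_tendsto_atTop

theorem hasDerivAt_one_div_add_pow (p : ℕ) {y c : ℝ} (h : y + c ≠ 0) :
    HasDerivAt (fun y => 1 / (y + c) ^ p) (-(p * (1 / (y + c) ^ (p + 1)))) y := by
  have h1 := (((hasDerivAt_id y).add_const c).fun_pow p).fun_inv (pow_ne_zero p h)
  simp only [id, one_div] at h1 ⊢
  refine h1.congr_deriv ?_
  rcases p with _ | q
  · simp
  · rw [Nat.add_sub_cancel]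
    field_simp
    ring

theorem hasDerivAt_tsum_one_div_add_pow {p : ℕ} (hp : 2 ≤ p) {x : ℝ} (hx : 0 < x) :
    HasDerivAt (fun y : ℝ => ∑' k : ℕ, 1 / (y + k + 1) ^ p)
      (-(p * ∑' k : ℕ, 1 / (x + k + 1) ^ (p + 1))) x := by
  have hderiv : ∀ (k : ℕ) (y : ℝ), y ∈ Ioi (0 : ℝ) →
      HasDerivAt (fun y : ℝ => 1 / (y + k + 1) ^ p) (-(p * (1 / (y + k + 1) ^ (p + 1)))) y := by
    intro k y (hy : 0 < y)
    simp only [add_assoc]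
    exact hasDerivAt_one_div_add_pow p (by positivity)
  have hbound : ∀ (k : ℕ) (y : ℝ), y ∈ Ioi (0 : ℝ) →
      ‖-(p * (1 / (y + k + 1) ^ (p + 1)))‖ ≤ p * (1 / ((k : ℝ) + 1) ^ (p + 1)) := by
    intro k y (hy : 0 < y)
    rw [norm_neg, Real.norm_of_nonneg (by positivity)]
    gcongr
    linarith
  rw [← tsum_mul_left, ← tsum_neg]
  exact hasDerivAt_tsum_of_isPreconnected
    ((summable_one_div_nat_add_one_pow (by omega)).mul_left _) isOpen_Ioi isPreconnected_Ioi
    hderiv hbound hx (summable_one_div_add_pow hx.le hp) hx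

theorem hasDerivAt_tsum_one_div_sub_one_div_add {x : ℝ} (hx : 0 < x) :
    HasDerivAt (fun y : ℝ => ∑' k : ℕ, (1 / ((k : ℝ) + 1) - 1 / (y + k + 1)))
      (∑' k : ℕ, 1 / (x + k + 1) ^ 2) x := by
  have hderiv : ∀ (k : ℕ) (y : ℝ), y ∈ Ioi (0 : ℝ) →
      HasDerivAt (fun y : ℝ => 1 / ((k : ℝ) + 1) - 1 / (y + k + 1)) (1 / (y + k + 1) ^ 2) y := by
    intro k y (hy : 0 < y)
    simp only [add_assoc]
    simpa using (hasDerivAt_one_div_add_pow 1 (c := k + 1)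
      (by positivity)).const_sub (1 / ((k : ℝ) + 1))
  have hbound : ∀ (k : ℕ) (y : ℝ), y ∈ Ioi (0 : ℝ) →
      ‖1 / (y + k + 1) ^ 2‖ ≤ 1 / ((k : ℝ) + 1) ^ 2 := by
    intro k y (hy : 0 < y)
    rw [Real.norm_of_nonneg (by positivity)]
    gcongr
    linarith
  exact hasDerivAt_tsum_of_isPreconnected (summable_one_div_nat_add_one_pow le_rfl)
    isOpen_Ioi isPreconnected_Ioi hderiv hbound hx (summable_one_div_sub_one_div_add hx.le) hx

theorem hasDerivAt_logGammaSeq_s4 {x : ℝ} (hx : 0 < x) (n : ℕ) :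
    HasDerivAt (BohrMollerup.logGammaSeq · n)
      (log n - harmonic n - 1 / x + ∑ k ∈ range n, (1 / ((k : ℝ) + 1) - 1 / (x + k + 1))) x := by
  have hlog : ∀ m ∈ range (n + 1), HasDerivAt (fun y => log (y + m)) (1 / (x + m)) x :=
    fun m _ => by
      simpa [one_div] using ((hasDerivAt_id x).add_const (m : ℝ)).log (by positivity)
  have h := (((hasDerivAt_id x).mul_const (log n)).add_const (log (n.factorial : ℝ))).sub
    (HasDerivAt.fun_sum hlog)
  refine h.congr_deriv ?_
  simp only [harmonic, sum_range_succ' (fun m : ℕ => 1 / (x + m)), sum_sub_distrib]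
  push_cast
  ring_nf

theorem tendstoUniformlyOn_deriv_logGammaSeq_s4 (b : ℝ) :
    TendstoUniformlyOn
      (fun (n : ℕ) (x : ℝ) =>
        log n - harmonic n - 1 / x + ∑ k ∈ range n, (1 / ((k : ℝ) + 1) - 1 / (x + k + 1)))
      (fun x => -eulerMascheroniConstant - 1 / x +
        ∑' k : ℕ, (1 / ((k : ℝ) + 1) - 1 / (x + k + 1)))
      atTop (Ioo 0 b) := by
  have hconst : TendstoUniformlyOn (fun (n : ℕ) (_ : ℝ) => log n - harmonic n)
      (fun _ => -eulerMascheroniConstant) atTop (Ioo 0 b) := by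
    refine Tendsto.tendstoUniformlyOn_const ?_ _
    simpa using tendsto_harmonic_sub_log.neg
  have hfixed : TendstoUniformlyOn (fun (_ : ℕ) (x : ℝ) => 1 / x) (fun x => 1 / x) atTop
      (Ioo 0 b) :=
    fun _ hu => Eventually.of_forall fun _ _ _ => refl_mem_uniformity hu
  have hsum := tendstoUniformlyOn_tsum_nat
    ((summable_one_div_nat_add_one_pow le_rfl).mul_left b) (s := Ioo 0 b)
    (f := fun k x => 1 / ((k : ℝ) + 1) - 1 / (x + k + 1)) fun k x hx => by
      rw [Real.norm_of_nonneg (sub_nonneg.mpr (by gcongr; linarith [hx.1]))]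
      exact (one_div_sub_one_div_add_le hx.1.le k).trans (by gcongr; exact hx.2.le)
  exact (hconst.sub hfixed).add hsum

theorem hasDerivAt_log_Gamma {x : ℝ} (hx : 0 < x) :
    HasDerivAt (fun y => log (Gamma y))
      (-eulerMascheroniConstant - 1 / x + ∑' k : ℕ, (1 / ((k : ℝ) + 1) - 1 / (x + k + 1))) x :=
  hasDerivAt_of_tendstoUniformlyOn isOpen_Ioo (tendstoUniformlyOn_deriv_logGammaSeq_s4 (x + 1))
    (Eventually.of_forall fun n _ hy => hasDerivAt_logGammaSeq_s4 hy.1 n)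
    (fun _ hy => BohrMollerup.tendsto_log_gamma hy.1) ⟨hx, by linarith⟩

theorem digamma_eq_tsum {x : ℝ} (hx : 0 < x) :
    digamma x =
      -eulerMascheroniConstant - 1 / x + ∑' k : ℕ, (1 / ((k : ℝ) + 1) - 1 / (x + k + 1)) :=
  (hasDerivAt_log_Gamma hx).deriv

theorem hasDerivAt_digamma {x : ℝ} (hx : 0 < x) :
    HasDerivAt digamma (1 / x ^ 2 + ∑' k : ℕ, 1 / (x + k + 1) ^ 2) x := by
  have hinv : HasDerivAt (fun y : ℝ => 1 / y) (-(1 / x ^ 2)) x := by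
    simpa using hasDerivAt_one_div_add_pow 1 (c := 0) (by simpa using hx.ne')
  have hseries := (hinv.const_sub (-eulerMascheroniConstant)).fun_add
    (hasDerivAt_tsum_one_div_sub_one_div_add hx)
  rw [neg_neg] at hseries
  exact hseries.congr_of_eventuallyEq
    (eventually_of_mem (Ioi_mem_nhds hx) fun y hy => digamma_eq_tsum hy)

theorem polygamma_one_eq_tsum {x : ℝ} (hx : 0 < x) :
    polygamma 1 x = 1 / x ^ 2 + ∑' k : ℕ, 1 / (x + k + 1) ^ 2 := by
  rw [polygamma, iteratedDeriv_one]
  exact (hasDerivAt_digamma hx).deriv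

theorem hasDerivAt_polygamma_one {x : ℝ} (hx : 0 < x) :
    HasDerivAt (polygamma 1) (-(2 / x ^ 3) - 2 * ∑' k : ℕ, 1 / (x + k + 1) ^ 3) x := by
  have hsq : HasDerivAt (fun y : ℝ => 1 / y ^ 2) (-(2 / x ^ 3)) x := by
    simpa [div_eq_mul_inv] using hasDerivAt_one_div_add_pow 2 (c := 0) (by simpa using hx.ne')
  have hseries := hsq.fun_add (hasDerivAt_tsum_one_div_add_pow le_rfl hx)
  rw [← sub_eq_add_neg] at hseries
  exact_mod_cast hseries.congr_of_eventuallyEq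
    (eventually_of_mem (Ioi_mem_nhds hx) fun y hy => polygamma_one_eq_tsum hy)

theorem polygamma_two_eq_tsum {x : ℝ} (hx : 0 < x) :
    polygamma 2 x = -(2 / x ^ 3) - 2 * ∑' k : ℕ, 1 / (x + k + 1) ^ 3 := by
  rw [polygamma, iteratedDeriv_succ, ← polygamma]
  exact (hasDerivAt_polygamma_one hx).deriv

theorem one_div_succ_sq_sub_lt_sub_succ {a t : ℝ} (ha : 0 < a) (ht : 0 ≤ t) :
    1 / (a + 1) ^ 2 - 2 * t * (1 / (a + 1) ^ 3) <
      (1 / a - t * (1 / a ^ 2 - 1 / a ^ 3)) -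
        (1 / (a + 1) - t * (1 / (a + 1) ^ 2 - 1 / (a + 1) ^ 3)) := by
  have hgap : (1 / a - t * (1 / a ^ 2 - 1 / a ^ 3)) -
      (1 / (a + 1) - t * (1 / (a + 1) ^ 2 - 1 / (a + 1) ^ 3)) -
      (1 / (a + 1) ^ 2 - 2 * t * (1 / (a + 1) ^ 3)) =
      1 / (a * (a + 1) ^ 2) + t * (2 * a + 1) / (a ^ 3 * (a + 1) ^ 3) := by
    field_simp
    ring
  have hpos : 0 < 1 / (a * (a + 1) ^ 2) + t * (2 * a + 1) / (a ^ 3 * (a + 1) ^ 3) := by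
    positivity
  linarith

theorem tsum_one_div_sq_sub_lt {t : ℝ} (ht : 0 < t) :
    ∑' k : ℕ, (1 / (t + k + 1) ^ 2 - 2 * t * (1 / (t + k + 1) ^ 3)) < 1 / t ^ 2 := by
  set g : ℕ → ℝ := fun k => 1 / (t + k) - t * (1 / (t + k) ^ 2 - 1 / (t + k) ^ 3) with hg
  have hstep : ∀ k : ℕ, 1 / (t + k + 1) ^ 2 - 2 * t * (1 / (t + k + 1) ^ 3) < g k - g (k + 1) := by
    intro k
    simpa [hg, add_assoc] using one_div_succ_sq_sub_lt_sub_succ (a := t + k) (by positivity) ht.le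
  have hlim : Tendsto g atTop (𝓝 0) := by
    have h := (tendsto_one_div_add_pow_atTop t one_ne_zero).sub
      (((tendsto_one_div_add_pow_atTop t two_ne_zero).sub
        (tendsto_one_div_add_pow_atTop t three_ne_zero)).const_mul t)
    simpa [hg] using h
  have hsummable : Summable fun k : ℕ => 1 / (t + k + 1) ^ 2 - 2 * t * (1 / (t + k + 1) ^ 3) :=
    (summable_one_div_add_pow ht.le le_rfl).sub
      ((summable_one_div_add_pow ht.le (by norm_num)).mul_left _)
  have hg0 : g 0 = 1 / t ^ 2 := by
    simp only [hg]
    field_simp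
    ring
  exact hg0 ▸ tsum_lt_of_le_sub_succ hsummable hlim (fun k => (hstep k).le) (hstep 0)

theorem polygamma_one_add_mul_polygamma_two_neg {t : ℝ} (ht : 0 < t) :
    polygamma 1 t + t * polygamma 2 t < 0 := by
  have hsplit : polygamma 1 t + t * polygamma 2 t =
      -(1 / t ^ 2) + ∑' k : ℕ, (1 / (t + k + 1) ^ 2 - 2 * t * (1 / (t + k + 1) ^ 3)) := by
    rw [polygamma_one_eq_tsum ht, polygamma_two_eq_tsum ht,
      (summable_one_div_add_pow ht.le le_rfl).tsum_sub
        ((summable_one_div_add_pow ht.le (by norm_num)).mul_left _), tsum_mul_left]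
    field_simp
    ring
  linarith [tsum_one_div_sq_sub_lt ht]

theorem strictConcaveOn_comp_exp {g g' g'' : ℝ → ℝ}
    (hg : ∀ t, 0 < t → HasDerivAt g (g' t) t) (hg' : ∀ t, 0 < t → HasDerivAt g' (g'' t) t)
    (hneg : ∀ t, 0 < t → g' t + t * g'' t < 0) :
    StrictConcaveOn ℝ univ fun x => g (exp x) := by
  have hd1 : ∀ x, HasDerivAt (fun x => g (exp x)) (g' (exp x) * exp x) x := fun x =>
    (hg _ (exp_pos x)).comp x (hasDerivAt_exp x)
  refine strictConcaveOn_univ_of_deriv2_neg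
    (continuous_iff_continuousAt.mpr fun x => (hd1 x).continuousAt) fun x => ?_
  have hd2 : HasDerivAt (fun x => g' (exp x) * exp x)
      (g'' (exp x) * exp x * exp x + g' (exp x) * exp x) x :=
    ((hg' _ (exp_pos x)).comp x (hasDerivAt_exp x)).mul (hasDerivAt_exp x)
  rw [Function.iterate_succ_apply, Function.iterate_one, funext fun x => (hd1 x).deriv,
    hd2.deriv]
  have hscaled := mul_neg_of_pos_of_neg (exp_pos x) (hneg _ (exp_pos x))
  linarith

theorem stmt4 : StrictConcaveOn ℝ Set.univ (fun x : ℝ => digamma (Real.exp x)) := by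
  refine strictConcaveOn_comp_exp (g' := polygamma 1) (g'' := polygamma 2) (fun t ht => ?_)
    (fun t ht => ?_) fun t ht => polygamma_one_add_mul_polygamma_two_neg ht
  · rw [polygamma_one_eq_tsum ht]
    exact hasDerivAt_digamma ht
  · rw [polygamma_two_eq_tsum ht]
    exact hasDerivAt_polygamma_one ht
end
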